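/- arXiv:2205.14613 — 2 statements merged into one kernel-verified Lean document; each statement's English description precedes it below -/
import Mathlib

section
/- Self-concordance of the logistic function: for h(x) = log(1 + exp(x)), the third derivative satisfies |h'''(x)| ≤ h''(x) for all real x. -/
/-!
The first derivative of `log (1 + exp x)` is the sigmoid `σ`, and `σ' = σ (1 - σ)`.
Hence `h'' = σ (1 - σ)` and `h''' = h'' * (1 - 2σ)`, and `|1 - 2σ| ≤ 1` because `0 < σ < 1`.
-/

open Real

namespace Real

lemma exp_div_one_add_exp (x : ℝ) : exp x / (1 + exp x) = sigmoid x := by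
  rw [sigmoid_def, exp_neg]
  field_simp
  ring

lemma deriv_log_one_add_exp : deriv (fun x => log (1 + exp x)) = sigmoid := by
  funext x
  rw [← exp_div_one_add_exp]
  exact (((hasDerivAt_exp x).const_add 1).log (by positivity)).deriv

lemma sigmoid_mul_one_sub_sigmoid_nonneg (x : ℝ) : 0 ≤ sigmoid x * (1 - sigmoid x) :=
  mul_nonneg (sigmoid_nonneg x) (sub_nonneg.2 (sigmoid_le_one x))

lemma deriv_sigmoid_mul_one_sub_sigmoid :
    deriv (fun x => sigmoid x * (1 - sigmoid x)) =
      fun x => sigmoid x * (1 - sigmoid x) * (1 - 2 * sigmoid x) := by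
  funext x
  have h : HasDerivAt (fun x => sigmoid x * (1 - sigmoid x)) _ x :=
    (hasDerivAt_sigmoid x).mul ((hasDerivAt_sigmoid x).const_sub 1)
  rw [h.deriv]
  ring

lemma iteratedDeriv_two_log_one_add_exp :
    iteratedDeriv 2 (fun x => log (1 + exp x)) = fun x => sigmoid x * (1 - sigmoid x) := by
  rw [iteratedDeriv_succ, iteratedDeriv_one, deriv_log_one_add_exp, deriv_sigmoid]

lemma iteratedDeriv_three_log_one_add_exp :
    iteratedDeriv 3 (fun x => log (1 + exp x)) =
      fun x => sigmoid x * (1 - sigmoid x) * (1 - 2 * sigmoid x) := by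
  rw [iteratedDeriv_succ, iteratedDeriv_two_log_one_add_exp, deriv_sigmoid_mul_one_sub_sigmoid]

lemma abs_one_sub_two_mul_sigmoid_le_one (x : ℝ) : |1 - 2 * sigmoid x| ≤ 1 :=
  abs_le.2 ⟨by linarith [sigmoid_le_one x], by linarith [sigmoid_nonneg x]⟩

end Real

/-- Self-concordance of the logistic function: for `h(x) = log(1 + exp x)`,
the third derivative satisfies `|h'''(x)| ≤ h''(x)` for all real `x`. -/
theorem logistic_self_concordant (h : ℝ → ℝ)
    (hh : ∀ x, h x = Real.log (1 + Real.exp x)) :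
    ∀ x : ℝ, |iteratedDeriv 3 h x| ≤ iteratedDeriv 2 h x := by
  obtain rfl : h = fun x => log (1 + exp x) := funext hh
  intro x
  rw [iteratedDeriv_three_log_one_add_exp, iteratedDeriv_two_log_one_add_exp, abs_mul,
    abs_of_nonneg (sigmoid_mul_one_sub_sigmoid_nonneg x)]
  exact mul_le_of_le_one_right (sigmoid_mul_one_sub_sigmoid_nonneg x)
    (abs_one_sub_two_mul_sigmoid_le_one x)
end

section
/- Deterministic Benjamini–Yekutieli-type bound: let p ≥ 1, α ∈ (0,1), and set ᾱ = α/(p·Σ_{i=1}^p 1/i). Suppose random p-values p̂₁,…,p̂_p satisfy P(p̂_i ≤ t) ≤ t for every i in a null set N ⊆ {1,…,p} and every t ∈ [0,1]. Define the selected set Ŝ via the BY rule: k̂ = max{k : p̂_{(k)} ≤ k·ᾱ} (with Ŝ = ∅ if no such k exists) and Ŝ = {j : p̂_j ≤ p̂_{(k̂)}}. Then E[card(Ŝ ∩ N)/max(card(Ŝ),1)] ≤ card(N)·(Σ_{j=1}^p 1/j)·ᾱ ≤ α. -/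
/-!
Call a selection `Ŝ` self-consistent if `p̂ᵢ ≤ #Ŝ · ᾱ` for all `i ∈ Ŝ`; the BY selection is, since
`p̂_(k̂) ≤ k̂ ᾱ` and `#Ŝ ≥ k̂`. Each selected null `i` then contributes `1 / #Ŝ` to the false
discovery proportion. Writing `1 / k = ∑_{j=k}^p c_j` with telescoping weights `c_j ≥ 0`, this is
at most `∑_{j=1}^p c_j 1{p̂ᵢ ≤ j ᾱ}`, which no longer depends on `Ŝ`. Super-uniformity bounds its
expectation by `∑_j c_j j ᾱ`, and summation by parts gives `∑_j c_j j = ∑_j 1 / j`.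
-/

open MeasureTheory Classical Finset

lemma one_le_sum_Icc_one_div {p : ℕ} (hp : 1 ≤ p) : 1 ≤ ∑ j ∈ Icc 1 p, (1 : ℝ) / j := by
  simpa using single_le_sum (f := fun j : ℕ => (1 : ℝ) / j) (fun j _ => by positivity)
    (mem_Icc.2 ⟨le_rfl, hp⟩)

noncomputable def byWeight (p j : ℕ) : ℝ := if j = p then 1 / p else 1 / j - 1 / (j + 1)

lemma byWeight_nonneg (p : ℕ) {j : ℕ} (hj : 0 < j) : 0 ≤ byWeight p j := by
  unfold byWeight
  split_ifs
  · positivity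
  · have : (0 : ℝ) < j := by exact_mod_cast hj
    exact sub_nonneg.2 (one_div_le_one_div_of_le this (by linarith))

lemma sum_Icc_byWeight {p k : ℕ} (hkp : k ≤ p) : ∑ j ∈ Icc k p, byWeight p j = 1 / k := by
  induction hkp using Nat.decreasingInduction with
  | self => simp [byWeight]
  | of_succ k hkp ih =>
    rw [← insert_Icc_add_one_left_eq_Icc hkp.le, sum_insert (by simp), ih, byWeight,
      if_neg hkp.ne]
    push_cast
    ring

lemma sum_Icc_byWeight_mul_self (p : ℕ) :
    ∑ j ∈ Icc 1 p, byWeight p j * j = ∑ j ∈ Icc 1 p, (1 : ℝ) / j := by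
  calc ∑ j ∈ Icc 1 p, byWeight p j * j = ∑ j ∈ Icc 1 p, ∑ _k ∈ Icc 1 j, byWeight p j := by
        simp [mul_comm]
    _ = ∑ k ∈ Icc 1 p, ∑ j ∈ Icc k p, byWeight p j :=
        sum_comm' fun j k => by simp only [mem_Icc]; omega
    _ = ∑ k ∈ Icc 1 p, (1 : ℝ) / k := sum_congr rfl fun k hk => sum_Icc_byWeight (mem_Icc.1 hk).2

noncomputable def byEnvelope (p : ℕ) (a x : ℝ) : ℝ :=
  ∑ j ∈ Icc 1 p, byWeight p j * (Set.Iic (j * a)).indicator 1 x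

lemma byEnvelope_nonneg (p : ℕ) (a x : ℝ) : 0 ≤ byEnvelope p a x :=
  sum_nonneg fun _ hj => mul_nonneg (byWeight_nonneg p (mem_Icc.1 hj).1)
    (Set.indicator_nonneg (fun _ _ => zero_le_one) x)

lemma one_div_le_byEnvelope {p k : ℕ} {a x : ℝ} (ha : 0 ≤ a) (hk : 0 < k) (hkp : k ≤ p)
    (hx : x ≤ k * a) : 1 / (k : ℝ) ≤ byEnvelope p a x := by
  rw [← sum_Icc_byWeight hkp]
  calc ∑ j ∈ Icc k p, byWeight p j
      = ∑ j ∈ Icc k p, byWeight p j * (Set.Iic (j * a)).indicator 1 x := by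
        refine sum_congr rfl fun j hj => ?_
        have hkj : (k : ℝ) ≤ j := by exact_mod_cast (mem_Icc.1 hj).1
        rw [Set.indicator_of_mem (s := Set.Iic _) (hx.trans (by gcongr)), Pi.one_apply,
          mul_one]
    _ ≤ byEnvelope p a x :=
        sum_le_sum_of_subset_of_nonneg (Icc_subset_Icc_left hk) fun j hj _ =>
          mul_nonneg (byWeight_nonneg p (mem_Icc.1 hj).1)
            (Set.indicator_nonneg (fun _ _ => zero_le_one) x)

def SuperUniform {Ω : Type*} [MeasurableSpace Ω] (μ : Measure Ω) (X : Ω → ℝ) : Prop :=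
  ∀ t ∈ Set.Icc (0 : ℝ) 1, μ {ω | X ω ≤ t} ≤ ENNReal.ofReal t

section Expectation

variable {Ω : Type*} [MeasurableSpace Ω] {μ : Measure Ω} {X : Ω → ℝ} {p : ℕ} {a : ℝ}

lemma SuperUniform.measureReal_le (hX : SuperUniform μ X) {t : ℝ} (ht : t ∈ Set.Icc (0 : ℝ) 1) :
    μ.real {ω | X ω ≤ t} ≤ t :=
  ENNReal.toReal_le_of_le_ofReal ht.1 (hX t ht)

lemma SuperUniform.integrable_indicator_comp (hX : SuperUniform μ X) (hXm : Measurable X) {t : ℝ}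
    (ht : t ∈ Set.Icc (0 : ℝ) 1) :
    Integrable (fun ω => (Set.Iic t).indicator (1 : ℝ → ℝ) (X ω)) μ := by
  simp_rw [← Set.indicator_comp_right]
  exact (integrable_indicator_iff (hXm measurableSet_Iic)).2
    (integrableOn_const ((hX t ht).trans_lt ENNReal.ofReal_lt_top).ne)

lemma SuperUniform.integral_indicator_comp_le (hX : SuperUniform μ X) (hXm : Measurable X) {t : ℝ}
    (ht : t ∈ Set.Icc (0 : ℝ) 1) :
    ∫ ω, (Set.Iic t).indicator (1 : ℝ → ℝ) (X ω) ∂μ ≤ t := by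
  simp_rw [← Set.indicator_comp_right, Pi.one_comp]
  rw [integral_indicator_one (hXm measurableSet_Iic)]
  exact hX.measureReal_le ht

lemma natCast_mul_mem_Icc (ha : 0 ≤ a) (hpa : p * a ≤ 1) {j : ℕ} (hj : j ∈ Icc 1 p) :
    (j : ℝ) * a ∈ Set.Icc (0 : ℝ) 1 :=
  ⟨by positivity, le_trans (by gcongr; exact_mod_cast (mem_Icc.1 hj).2) hpa⟩

lemma SuperUniform.integrable_byEnvelope (hX : SuperUniform μ X) (hXm : Measurable X)
    (ha : 0 ≤ a) (hpa : p * a ≤ 1) : Integrable (fun ω => byEnvelope p a (X ω)) μ :=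
  integrable_finsetSum _ fun _ hj =>
    (hX.integrable_indicator_comp hXm (natCast_mul_mem_Icc ha hpa hj)).const_mul _

lemma SuperUniform.integral_byEnvelope_le (hX : SuperUniform μ X) (hXm : Measurable X)
    (ha : 0 ≤ a) (hpa : p * a ≤ 1) :
    ∫ ω, byEnvelope p a (X ω) ∂μ ≤ (∑ j ∈ Icc 1 p, (1 : ℝ) / j) * a := by
  have ht := fun j (hj : j ∈ Icc 1 p) => natCast_mul_mem_Icc ha hpa hj
  unfold byEnvelope
  rw [integral_finsetSum _ fun j hj => (hX.integrable_indicator_comp hXm (ht j hj)).const_mul _,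
    ← sum_Icc_byWeight_mul_self, sum_mul]
  refine sum_le_sum fun j hj => ?_
  rw [integral_const_mul, mul_assoc]
  exact mul_le_mul_of_nonneg_left (hX.integral_indicator_comp_le hXm (ht j hj))
    (byWeight_nonneg p (mem_Icc.1 hj).1)

end Expectation

section SelfConsistency

variable {ι : Type*}

def IsSelfConsistent (x : ι → ℝ) (a : ℝ) (S : Finset ι) : Prop :=
  ∀ i ∈ S, x i ≤ #S * a

lemma IsSelfConsistent.empty (x : ι → ℝ) (a : ℝ) : IsSelfConsistent x a ∅ := by
  simp [IsSelfConsistent]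

lemma IsSelfConsistent.card_inter_div_le_sum_byEnvelope [DecidableEq ι] {x : ι → ℝ} {a : ℝ}
    {S : Finset ι} (hS : IsSelfConsistent x a S) (ha : 0 ≤ a) {p : ℕ} (hSp : #S ≤ p)
    (N : Finset ι) :
    (#(S ∩ N) : ℝ) / (max #S 1 : ℕ) ≤ ∑ i ∈ N, byEnvelope p a (x i) := by
  rcases S.eq_empty_or_nonempty with rfl | hne
  · simpa using sum_nonneg fun i _ => byEnvelope_nonneg p a (x i)
  rw [max_eq_left hne.card_pos, card_eq_sum_ones, Nat.cast_sum, sum_div]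
  calc ∑ i ∈ S ∩ N, ((1 : ℕ) : ℝ) / #S ≤ ∑ i ∈ S ∩ N, byEnvelope p a (x i) :=
        sum_le_sum fun i hi => by
          simpa using one_div_le_byEnvelope ha hne.card_pos hSp (hS i (mem_inter.1 hi).1)
    _ ≤ ∑ i ∈ N, byEnvelope p a (x i) :=
        sum_le_sum_of_subset_of_nonneg inter_subset_right fun i _ _ => byEnvelope_nonneg p a (x i)

variable [Fintype ι]

noncomputable def orderStat (x : ι → ℝ) (k : ℕ) : ℝ :=
  sInf {c : ℝ | k ≤ #{j | x j ≤ c}}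

lemma le_card_filter_le_orderStat (x : ι → ℝ) {k : ℕ} (hk : k ≤ Fintype.card ι) :
    k ≤ #{j | x j ≤ orderStat x k} := by
  set s := orderStat x k
  by_contra! hlt
  obtain ⟨b, hb⟩ := (Set.finite_range x).bddAbove
  have hne : {c : ℝ | k ≤ #{j | x j ≤ c}}.Nonempty :=
    ⟨b, by simpa [filter_true_of_mem fun j _ => hb (Set.mem_range_self j)]⟩
  have hgt : ({j | s < x j} : Finset ι).Nonempty := by
    by_contra! h
    have hall : ({j | x j ≤ s} : Finset ι) = univ :=
      filter_true_of_mem fun j _ => not_lt.1 (filter_eq_empty_iff.1 h (mem_univ j))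
    rw [hall, card_univ] at hlt
    omega
  obtain ⟨m, hm, hmin⟩ := exists_min_image _ x hgt
  obtain ⟨c, hc, hcm⟩ := exists_lt_of_csInf_lt hne (mem_filter.1 hm).2
  have hsub : ({j | x j ≤ c} : Finset ι) ⊆ ({j | x j ≤ s} : Finset ι) := fun j hj => by
    simp only [mem_filter, mem_univ, true_and] at hj ⊢
    by_contra! hsj
    exact (hmin j (by simpa using hsj)).trans hj |>.not_gt hcm
  exact (hc.trans (card_le_card hsub)).not_gt hlt

lemma isSelfConsistent_filter_le_orderStat_sSup (x : ι → ℝ) {a : ℝ} (ha : 0 ≤ a) {K : Set ℕ}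
    (hne : K.Nonempty) (hK : ∀ k ∈ K, k ≤ Fintype.card ι ∧ orderStat x k ≤ k * a) :
    IsSelfConsistent x a {j | x j ≤ orderStat x (sSup K)} := by
  obtain ⟨hk, hks⟩ := hK _ (Nat.sSup_mem hne ⟨_, fun k hk => (hK k hk).1⟩)
  exact fun i hi => ((mem_filter.1 hi).2.trans hks).trans
    (by gcongr; exact le_card_filter_le_orderStat x hk)

variable [DecidableEq ι] {Ω : Type*} [MeasurableSpace Ω]

theorem integral_card_inter_div_le_of_isSelfConsistent (μ : Measure Ω) {p : ℕ}
    (hp : Fintype.card ι ≤ p) {a : ℝ} (ha : 0 ≤ a) (hpa : p * a ≤ 1) {X : ι → Ω → ℝ}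
    (hXm : ∀ i, Measurable (X i)) {N : Finset ι} (hN : ∀ i ∈ N, SuperUniform μ (X i))
    {S : Ω → Finset ι} (hS : ∀ ω, IsSelfConsistent (X · ω) a (S ω)) :
    ∫ ω, (#(S ω ∩ N) : ℝ) / (max #(S ω) 1 : ℕ) ∂μ ≤ #N * (∑ j ∈ Icc 1 p, (1 : ℝ) / j) * a := by
  have hint i (hi : i ∈ N) := (hN i hi).integrable_byEnvelope (hXm i) ha hpa
  calc ∫ ω, (#(S ω ∩ N) : ℝ) / (max #(S ω) 1 : ℕ) ∂μ
      ≤ ∫ ω, ∑ i ∈ N, byEnvelope p a (X i ω) ∂μ :=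
        integral_mono_of_nonneg (ae_of_all _ fun ω => by positivity) (integrable_finsetSum _ hint)
          (ae_of_all _ fun ω =>
            (hS ω).card_inter_div_le_sum_byEnvelope ha ((card_le_univ _).trans hp) N)
    _ = ∑ i ∈ N, ∫ ω, byEnvelope p a (X i ω) ∂μ := integral_finsetSum _ hint
    _ ≤ ∑ _i ∈ N, (∑ j ∈ Icc 1 p, (1 : ℝ) / j) * a :=
        sum_le_sum fun i hi => (hN i hi).integral_byEnvelope_le (hXm i) ha hpa
    _ = #N * (∑ j ∈ Icc 1 p, (1 : ℝ) / j) * a := by rw [sum_const, nsmul_eq_mul, mul_assoc]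

end SelfConsistency

theorem by_fdr_bound_general {Ω : Type*} [MeasurableSpace Ω]
    (μ : Measure Ω)
    (p : ℕ) (hp : 1 ≤ p) (α : ℝ) (hα : α ∈ Set.Ioo (0 : ℝ) 1)
    (abar : ℝ)
    (habar : abar = α / (p * ∑ i ∈ Finset.Icc 1 p, (1 : ℝ) / i))
    (phat : Fin p → Ω → ℝ) (hmeas : ∀ j, Measurable (phat j))
    (N : Finset (Fin p))
    (hnull : ∀ i ∈ N, ∀ t ∈ Set.Icc (0 : ℝ) 1,
      μ {ω | phat i ω ≤ t} ≤ ENNReal.ofReal t)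
    (sVal : Ω → ℕ → ℝ)
    (hsVal : ∀ ω k, sVal ω k =
      sInf {c : ℝ | k ≤ (Finset.univ.filter fun j => phat j ω ≤ c).card})
    (K : Ω → Set ℕ)
    (hK : ∀ ω, K ω = {k | k ∈ Finset.Icc 1 p ∧ sVal ω k ≤ k * abar})
    (khat : Ω → ℕ) (hkhat : ∀ ω, khat ω = sSup (K ω))
    (Shat : Ω → Finset (Fin p))
    (hShat : ∀ ω, Shat ω =
      if (K ω).Nonempty then
        Finset.univ.filter fun j => phat j ω ≤ sVal ω (khat ω)
      else ∅) :
    (∫ ω, (((Shat ω ∩ N).card : ℝ) / (max (Shat ω).card 1 : ℕ)) ∂μ) ≤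
        N.card * (∑ j ∈ Finset.Icc 1 p, (1 : ℝ) / j) * abar ∧
      N.card * (∑ j ∈ Finset.Icc 1 p, (1 : ℝ) / j) * abar ≤ α := by
  obtain ⟨hα0, hα1⟩ := hα
  have hH := one_le_sum_Icc_one_div hp
  have hpHa : p * (∑ j ∈ Icc 1 p, (1 : ℝ) / j) * abar = α := by
    rw [habar]
    field_simp
  have ha : 0 ≤ abar := by rw [habar]; positivity
  have hpa : p * abar ≤ 1 := by nlinarith
  have hN : (#N : ℝ) ≤ p := by exact_mod_cast (card_le_univ N).trans_eq (Fintype.card_fin p)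
  have hS ω : IsSelfConsistent (phat · ω) abar (Shat ω) := by
    rw [hShat, hkhat]
    split_ifs with hne
    · rw [hsVal]
      refine isSelfConsistent_filter_le_orderStat_sSup _ ha hne fun k hk => ?_
      rw [hK, Set.mem_ofPred_eq, mem_Icc, hsVal] at hk
      exact ⟨by simpa using hk.1.2, hk.2⟩
    · exact .empty _ _
  refine ⟨integral_card_inter_div_le_of_isSelfConsistent μ (Fintype.card_fin p).le ha hpa hmeas
    hnull hS, ?_⟩
  calc #N * (∑ j ∈ Icc 1 p, (1 : ℝ) / j) * abar
      ≤ p * (∑ j ∈ Icc 1 p, (1 : ℝ) / j) * abar := by gcongr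
    _ = α := hpHa

/-- Deterministic Benjamini–Yekutieli-type FDR bound: with `p ≥ 1`,
`α ∈ (0,1)`, `ᾱ = α/(p Σ_{i=1}^p 1/i)`, super-uniform null p-values
(`P(p̂_i ≤ t) ≤ t` for `i ∈ N`, `t ∈ [0,1]`), and the BY selection rule
(`k̂ = max{k : p̂_{(k)} ≤ kᾱ}`, `Ŝ = {j : p̂_j ≤ p̂_{(k̂)}}`, `Ŝ = ∅` if no such
`k` exists), the expected false discovery proportion over `N` satisfies
`E[card(Ŝ ∩ N)/max(card Ŝ, 1)] ≤ card(N)(Σ_{j=1}^p 1/j)ᾱ ≤ α`. -/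
theorem by_fdr_bound {Ω : Type*} [MeasurableSpace Ω]
    (μ : Measure Ω) [IsProbabilityMeasure μ]
    (p : ℕ) (hp : 1 ≤ p) (α : ℝ) (hα : α ∈ Set.Ioo (0 : ℝ) 1)
    (abar : ℝ)
    (habar : abar = α / (p * ∑ i ∈ Finset.Icc 1 p, (1 : ℝ) / i))
    (phat : Fin p → Ω → ℝ) (hmeas : ∀ j, Measurable (phat j))
    (hrange : ∀ j ω, phat j ω ∈ Set.Icc (0 : ℝ) 1)
    (N : Finset (Fin p))
    (hnull : ∀ i ∈ N, ∀ t ∈ Set.Icc (0 : ℝ) 1,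
      μ {ω | phat i ω ≤ t} ≤ ENNReal.ofReal t)
    (sVal : Ω → ℕ → ℝ)
    (hsVal : ∀ ω k, sVal ω k =
      sInf {c : ℝ | k ≤ (Finset.univ.filter fun j => phat j ω ≤ c).card})
    (K : Ω → Set ℕ)
    (hK : ∀ ω, K ω = {k | k ∈ Finset.Icc 1 p ∧ sVal ω k ≤ k * abar})
    (khat : Ω → ℕ) (hkhat : ∀ ω, khat ω = sSup (K ω))
    (Shat : Ω → Finset (Fin p))
    (hShat : ∀ ω, Shat ω =
      if (K ω).Nonempty then
        Finset.univ.filter fun j => phat j ω ≤ sVal ω (khat ω)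
      else ∅) :
    (∫ ω, (((Shat ω ∩ N).card : ℝ) / (max (Shat ω).card 1 : ℕ)) ∂μ) ≤
        N.card * (∑ j ∈ Finset.Icc 1 p, (1 : ℝ) / j) * abar ∧
      N.card * (∑ j ∈ Finset.Icc 1 p, (1 : ℝ) / j) * abar ≤ α :=
  by_fdr_bound_general μ p hp α hα abar habar phat hmeas N hnull sVal hsVal K hK khat hkhat Shat
    hShat
end
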